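/- Let A, B, C be locally small categories (hom-sets in Type u), let g : A ⥤ B, h : B ⥤ C, f : A ⥤ C be functors, and let φ : f ⟶ g ⋙ h be a natural transformation. Define B(g,1) : B ⥤ (Aᵒᵖ ⥤ Type u) by b ↦ (a ↦ Hom_B(g.obj a, b)), define C(f,1) : C ⥤ (Aᵒᵖ ⥤ Type u) by c ↦ (a ↦ Hom_C(f.obj a, c)), and define φ' : B(g,1) ⟶ h ⋙ C(f,1) by ((φ'.app b).app a)(β) = φ.app a ≫ h.map β for β : g.obj a ⟶ b. Then φ exhibits h as a pointwise left Kan extension of f along g if and only if φ' exhibits h as an absolute left lifting of B(g,1) along C(f,1). -/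

import Mathlib

open CategoryTheory Opposite

universe u v₁ v₂ v₃ u₁ u₂ u₃ ux vx

section HomFunctor

variable {A : Type u₁} {B : Type u₂} {C : Type u₃}
variable [Category.{u} A] [Category.{u} B] [Category.{u} C]

/-- The functor `B(g,1) : B ⥤ (Aᵒᵖ ⥤ Type u)`, `b ↦ (a ↦ Hom_B(g.obj a, b))`. -/
def homFunctor (g : A ⥤ B) : B ⥤ (Aᵒᵖ ⥤ Type u) where
  obj b :=
    { obj := fun a => (g.obj a.unop ⟶ b)
      map := fun m => TypeCat.ofHom fun β => g.map m.unop ≫ β }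
  map k := { app := fun a => TypeCat.ofHom fun β => β ≫ k }

/-- The 2-cell `φ' : B(g,1) ⟶ h ⋙ C(f,1)` associated to `φ : f ⟶ g ⋙ h`, with
components `β ↦ φ.app a ≫ h.map β`. -/
def primeTrans (g : A ⥤ B) (h : B ⥤ C) (f : A ⥤ C) (φ : f ⟶ g ⋙ h) :
    homFunctor g ⟶ h ⋙ homFunctor f where
  app b :=
    { app := fun a => TypeCat.ofHom fun β => φ.app a.unop ≫ h.map β
      naturality := by
        intro a a' m
        ext β
        have hn := φ.naturality m.unop
        revert β
        change ∀ β : g.obj a.unop ⟶ b, φ.app a'.unop ≫ h.map (g.map m.unop ≫ β) =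
          f.map m.unop ≫ φ.app a.unop ≫ h.map β
        intro β
        dsimp at hn
        rw [Functor.map_comp, ← Category.assoc, ← hn, Category.assoc] }
  naturality := by
    intro b b' k
    ext a β
    revert β
    change ∀ β : g.obj a.unop ⟶ b, φ.app a.unop ≫ h.map (β ≫ k) =
      (φ.app a.unop ≫ h.map β) ≫ h.map k
    intro β
    rw [Functor.map_comp, Category.assoc]

end HomFunctor


/-- `ψ : s ⟶ h ⋙ t` exhibits `h` as an absolute left lifting of `s` along `t` when for
every category `X` and all functors `x : X ⥤ B`, `k : X ⥤ C`, pasting with the whiskering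
of `ψ` by `x` is a bijection from 2-cells `x ⋙ h ⟶ k` to 2-cells `x ⋙ s ⟶ k ⋙ t`. -/
def ExhibitsAbsoluteLeftLifting.{xu, xv, bu, bv, cu, cv, pu, pv}
    {B : Type bu} {C : Type cu} {P : Type pu}
    [Category.{bv} B] [Category.{cv} C] [Category.{pv} P]
    (s : B ⥤ P) (h : B ⥤ C) (t : C ⥤ P) (ψ : s ⟶ h ⋙ t) : Prop :=
  ∀ (X : Type xu) [Category.{xv} X] (x : X ⥤ B) (k : X ⥤ C),
    Function.Bijective fun δ : x ⋙ h ⟶ k => Functor.whiskerLeft x ψ ≫ Functor.whiskerRight δ t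

/-!
Both sides are conditions on the maps `β ↦ φ'_b ≫ C(f,β)` from `h b ⟶ c` to
`B(g,b) ⟶ C(f,c)`, one for each pair of objects `b`, `c`. A natural transformation
`B(g,b) ⟶ C(f,c)` is the same thing as a cocone with vertex `c` over `g/b ⥤ A ⥤ C`, and under
this identification the map becomes `β ↦ (coconeAt b).extend β`; its bijectivity for every `c`
is the colimit property at `b`. On the other side, absolute left liftings are detected
objectwise: testing against a one-object category `X` gives the pointwise bijections, and
conversely pointwise inverses assemble into a natural transformation by naturality of `φ'`.
-/

namespace CategoryTheory.Limits.Cocone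

variable {J : Type u₁} [Category.{v₁} J] {D : Type u₂} [Category.{v₂} D] {F : J ⥤ D}

theorem nonempty_isColimit_iff_bijective (t : Cocone F) :
    Nonempty (IsColimit t) ↔
      ∀ W : D, Function.Bijective fun β : t.pt ⟶ W => t.ι ≫ (Functor.const J).map β := by
  refine ⟨fun ⟨ht⟩ W => ht.homEquiv.bijective, fun H => ⟨IsColimit.ofExistsUnique fun s => ?_⟩⟩
  obtain ⟨d, hd⟩ := (H s.pt).2 s.ι
  refine ⟨d, fun j => NatTrans.congr_app hd j, fun d' hd' => (H s.pt).1 ?_⟩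
  rw [hd]
  ext j
  exact hd' j

end CategoryTheory.Limits.Cocone

section AbsoluteLifting

variable {B : Type u₁} {C : Type u₂} {P : Type u₃} [Category.{v₁} B] [Category.{v₂} C]
  [Category.{v₃} P] {s : B ⥤ P} {h : B ⥤ C} {t : C ⥤ P} {ψ : s ⟶ h ⋙ t}

theorem ExhibitsAbsoluteLeftLifting.bijective (H : ExhibitsAbsoluteLeftLifting.{ux, vx} s h t ψ)
    (b : B) (c : C) : Function.Bijective fun β : h.obj b ⟶ c => ψ.app b ≫ t.map β := by
  let X := ULiftHom.{vx} (ULift.{ux} (Discrete PUnit.{1}))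
  let p₀ : X := ULiftHom.objUp (ULift.up ⟨PUnit.unit⟩)
  let constTrans : (h.obj b ⟶ c) → ((Functor.const X).obj b ⋙ h ⟶ (Functor.const X).obj c) :=
    fun β => { app _ := β, naturality := by intros; simp }
  have hX := H X ((Functor.const X).obj b) ((Functor.const X).obj c)
  constructor
  · intro β₁ β₂ e
    have : constTrans β₁ = constTrans β₂ := hX.1 (NatTrans.ext (funext fun _ => e))
    exact NatTrans.congr_app this p₀
  · intro θ
    obtain ⟨δ, hδ⟩ := hX.2 { app _ := θ, naturality := by intros; simp }
    exact ⟨δ.app p₀, NatTrans.congr_app hδ p₀⟩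

theorem exhibitsAbsoluteLeftLifting_of_bijective
    (H : ∀ b c, Function.Bijective fun β : h.obj b ⟶ c => ψ.app b ≫ t.map β) :
    ExhibitsAbsoluteLeftLifting.{ux, vx} s h t ψ := by
  intro X _ x k
  let lift (p : X) := (Equiv.ofBijective _ (H (x.obj p) (k.obj p))).symm
  constructor
  · intro δ₁ δ₂ e
    ext p
    exact (H _ _).1 (NatTrans.congr_app e p)
  · intro Θ
    have lift_spec (p : X) : ψ.app (x.obj p) ≫ t.map (lift p (Θ.app p)) = Θ.app p :=
      (Equiv.ofBijective _ (H _ _)).apply_symm_apply _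
    refine ⟨{ app p := lift p (Θ.app p), naturality := fun p q m => (H _ _).1 ?_ }, ?_⟩
    · have := Θ.naturality m
      simp only [Functor.comp_obj, Functor.comp_map, Functor.map_comp] at this ⊢
      rw [← Category.assoc, ← Functor.comp_map, ← ψ.naturality, Category.assoc, lift_spec,
        ← Category.assoc, lift_spec, this]
    · ext p
      exact lift_spec p

theorem exhibitsAbsoluteLeftLifting_iff_bijective :
    ExhibitsAbsoluteLeftLifting.{ux, vx} s h t ψ ↔
      ∀ b c, Function.Bijective fun β : h.obj b ⟶ c => ψ.app b ≫ t.map β :=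
  ⟨ExhibitsAbsoluteLeftLifting.bijective, exhibitsAbsoluteLeftLifting_of_bijective⟩

end AbsoluteLifting

section CostructuredArrow

variable {A : Type u₁} {B : Type u₂} {C : Type u₃}
  [Category.{u} A] [Category.{u} B] [Category.{u} C]

def coconeEquivHomFunctorHom (g : A ⥤ B) (f : A ⥤ C) (b : B) (c : C) :
    (CostructuredArrow.proj g b ⋙ f ⟶ (Functor.const _).obj c) ≃
      ((homFunctor g).obj b ⟶ (homFunctor f).obj c) where
  toFun ι :=
    { app a := TypeCat.ofHom fun β => ι.app (CostructuredArrow.mk β)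
      naturality a a' m := by
        ext β
        exact ((ι.naturality (CostructuredArrow.homMk m.unop :
          CostructuredArrow.mk (g.map m.unop ≫ β) ⟶ CostructuredArrow.mk β)).trans
            (Category.comp_id _)).symm }
  invFun θ :=
    { app x := θ.app (op x.left) x.hom
      naturality x y m := by
        have : θ.app (op x.left) (g.map m.left ≫ y.hom) = f.map m.left ≫ θ.app (op y.left) y.hom :=
          ConcreteCategory.congr_hom (θ.naturality m.left.op) y.hom
        rw [CostructuredArrow.w m] at this
        exact this.symm.trans (Category.comp_id _).symm }
  left_inv ι := rfl
  right_inv θ := rfl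

theorem coconeEquivHomFunctorHom_coconeAt (g : A ⥤ B) (h : B ⥤ C) (f : A ⥤ C)
    (φ : f ⟶ g ⋙ h) (b : B) (c : C) (β : h.obj b ⟶ c) :
    coconeEquivHomFunctorHom g f b c
        (((Functor.LeftExtension.mk h φ).coconeAt b).ι ≫ (Functor.const _).map β) =
      (primeTrans g h f φ).app b ≫ (homFunctor f).map β :=
  rfl

theorem nonempty_isPointwiseLeftKanExtensionAt_iff_bijective (g : A ⥤ B) (h : B ⥤ C)
    (f : A ⥤ C) (φ : f ⟶ g ⋙ h) (b : B) :
    Nonempty ((Functor.LeftExtension.mk h φ).IsPointwiseLeftKanExtensionAt b) ↔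
      ∀ c, Function.Bijective fun β : h.obj b ⟶ c =>
        (primeTrans g h f φ).app b ≫ (homFunctor f).map β := by
  refine (Limits.Cocone.nonempty_isColimit_iff_bijective _).trans (forall_congr' fun c => ?_)
  rw [← (coconeEquivHomFunctorHom g f b c).comp_bijective]
  exact iff_of_eq (congrArg _ (funext (coconeEquivHomFunctorHom_coconeAt g h f φ b c)))

end CostructuredArrow

/-- `φ : f ⟶ g ⋙ h` exhibits `h` as a pointwise left Kan extension of
`f` along `g` if and only if `φ' : B(g,1) ⟶ h ⋙ C(f,1)` exhibits `h` as an absolute left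
lifting of `B(g,1)` along `C(f,1)`. -/
theorem stmt16 {A : Type u₁} {B : Type u₂} {C : Type u₃}
    [Category.{u} A] [Category.{u} B] [Category.{u} C]
    (g : A ⥤ B) (h : B ⥤ C) (f : A ⥤ C) (φ : f ⟶ g ⋙ h) :
    Nonempty (Functor.LeftExtension.mk h φ).IsPointwiseLeftKanExtension ↔
      ExhibitsAbsoluteLeftLifting.{ux, vx}
        (homFunctor g) h (homFunctor f) (primeTrans g h f φ) :=
  Classical.nonempty_pi.trans <|
    (forall_congr' (nonempty_isPointwiseLeftKanExtensionAt_iff_bijective g h f φ)).trans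
      exhibitsAbsoluteLeftLifting_iff_bijective.symm
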